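/- arXiv:2303.03273 — 3 statements merged into one kernel-verified Lean document; each statement's English description precedes it below -/
import Mathlib

section
/- Pointwise Picone inequality: for real numbers a, b > 0 and c, d ∈ ℝ, one has (a - b)·(c²/a - d²/b) ≤ (c - d)². -/
/-- Pointwise (nonlocal) Picone inequality: for `a, b > 0` and `c, d ∈ ℝ`,
`(a - b) * (c²/a - d²/b) ≤ (c - d)²`. -/
theorem pointwise_picone (a b c d : ℝ) (ha : 0 < a) (hb : 0 < b) :
    (a - b) * (c ^ 2 / a - d ^ 2 / b) ≤ (c - d) ^ 2 := by
  rw [div_sub_div _ _ ha.ne' hb.ne', mul_div_assoc', div_le_iff₀ (by positivity)]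
  nlinarith [sq_nonneg (b*c - a*d), mul_pos ha hb]
end

section
/- Let V be a reflexive Banach space, K ⊂ V convex and weakly closed, H a Hilbert space with V continuously embedded in H via j, and Ψ(u) = ½‖j(u)‖_H². Suppose ũ is a Szulkin critical point of I_K = Ψ_K − Φ and ṽ ∈ K satisfies ⟨j(ṽ), j(φ)⟩_H = DΦ(ũ)(φ) for all φ ∈ V. Then ũ = ṽ (so in particular ⟨j(ũ), j(φ)⟩_H = DΦ(ũ)(φ) for all φ ∈ V, i.e., ũ solves the unrestricted Euler–Lagrange equation). -/
/-- Variational principle on convex sets: if `ũ` is a Szulkin critical point of the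
restricted functional `I_K = Ψ_K − Φ`, with `Ψ(u) = ½‖j u‖²` for a continuous injective
embedding `j : V → H` into a Hilbert space, and `ṽ ∈ K` solves the linear problem
`⟨j ṽ, j φ⟩ = DΦ(ũ) φ` for all `φ`, then `ũ = ṽ`, so `ũ` solves the unrestricted
Euler–Lagrange equation. -/
theorem critical_point_solves_equation
    {V H : Type*} [NormedAddCommGroup V] [NormedSpace ℝ V] [CompleteSpace V]
    [NormedAddCommGroup H] [InnerProductSpace ℝ H] [CompleteSpace H]
    (hrefl : Function.Surjective (NormedSpace.inclusionInDoubleDual ℝ V))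
    (K : Set V) (hK : Convex ℝ K)
    (hKw : IsClosed (show Set (WeakSpace ℝ V) from K))
    (j : V →L[ℝ] H) (hj : Function.Injective j)
    (Ψ : V → ℝ) (hΨ : ∀ u, Ψ u = (1 / 2) * ‖j u‖ ^ 2)
    (Φ : V → ℝ) (DΦ : V → V →L[ℝ] ℝ)
    (hΦ : ∀ u, HasFDerivAt Φ (DΦ u) u) (hΦC : Continuous DΦ)
    (ut : V) (hutK : ut ∈ K)
    (hcrit : ∀ v ∈ K, 0 ≤ DΦ ut (ut - v) + Ψ v - Ψ ut)
    (vt : V) (hvtK : vt ∈ K)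
    (hvt : ∀ φ : V, inner (𝕜 := ℝ) (j vt) (j φ) = DΦ ut φ) :
    ut = vt ∧ ∀ φ : V, inner (𝕜 := ℝ) (j ut) (j φ) = DΦ ut φ := by
  have h := hcrit vt hvtK
  rw [hΨ vt, hΨ ut, ← hvt (ut - vt)] at h
  have key : j ut = j vt := by
    have hsq : ∀ x : H, ‖x‖ ^ 2 = inner (𝕜 := ℝ) x x := by
      intro x; rw [real_inner_self_eq_norm_sq]
    have hmap : j (ut - vt) = j ut - j vt := map_sub j ut vt
    rw [hmap, hsq, hsq] at h
    have hexp : inner (𝕜 := ℝ) (j vt) (j ut - j vt) + 1 / 2 * inner (𝕜 := ℝ) (j vt) (j vt)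
        - 1 / 2 * inner (𝕜 := ℝ) (j ut) (j ut)
        = -(1 / 2) * inner (𝕜 := ℝ) (j ut - j vt) (j ut - j vt) := by
      simp only [inner_sub_left, inner_sub_right, real_inner_comm (j ut) (j vt)]
      ring
    rw [hexp] at h
    have h0 : inner (𝕜 := ℝ) (j ut - j vt) (j ut - j vt) ≤ 0 := by linarith
    have := real_inner_self_nonpos.mp h0
    rwa [sub_eq_zero] at this
  have huv : ut = vt := hj key
  refine ⟨huv, ?_⟩
  subst huv
  exact hvt
end

section
/- Suppose u_λ, ξ₁ are positive measurable functions on a bounded domain Ω with ∫_Ω u_λ^{p-1} ξ₁ + λ ∫_Ω u_λ^{q-1} ξ₁ = λ₁ ∫_Ω ξ₁ u_λ, and suppose λ̃ satisfies τ^{p-1} + λ̃ τ^{q-1} > λ₁ τ for all τ > 0. If ∫_Ω u_λ^{q-1} ξ₁ > 0, then λ < λ̃. -/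
open MeasureTheory

/-- If positive `u_λ, ξ₁` satisfy the integral identity
`∫ u_λ^(p-1) ξ₁ + λ ∫ u_λ^(q-1) ξ₁ = λ₁ ∫ ξ₁ u_λ`, and `λ̃` satisfies
`τ^(p-1) + λ̃ τ^(q-1) > λ₁ τ` for all `τ > 0`, and `∫ u_λ^(q-1) ξ₁ > 0`,
then `λ < λ̃`. -/
theorem lambda_lt_of_eigen_identity {α : Type*} [MeasurableSpace α] (μm : Measure α)
    (p q lam lam₁ lamt : ℝ) (hq : 1 < q) (hq2 : q < 2) (hp : 2 < p) (hlam : 0 < lam)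
    (u ξ : α → ℝ) (hu : ∀ᵐ x ∂μm, 0 < u x) (hξ : ∀ᵐ x ∂μm, 0 < ξ x)
    (hi1 : Integrable (fun x => u x ^ (p - 1) * ξ x) μm)
    (hi2 : Integrable (fun x => u x ^ (q - 1) * ξ x) μm)
    (hi3 : Integrable (fun x => ξ x * u x) μm)
    (hid : (∫ x, u x ^ (p - 1) * ξ x ∂μm) + lam * ∫ x, u x ^ (q - 1) * ξ x ∂μm =
      lam₁ * ∫ x, ξ x * u x ∂μm)
    (hlamt : ∀ τ > (0 : ℝ), lam₁ * τ < τ ^ (p - 1) + lamt * τ ^ (q - 1))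
    (hpos : 0 < ∫ x, u x ^ (q - 1) * ξ x ∂μm) :
    lam < lamt := by
  set g : α → ℝ := fun x =>
    u x ^ (p - 1) * ξ x + lamt * (u x ^ (q - 1) * ξ x) - lam₁ * (ξ x * u x) with hg
  have hgi : Integrable g μm := (hi1.add (hi2.const_mul lamt)).sub (hi3.const_mul lam₁)
  have hgpos : ∀ᵐ x ∂μm, 0 < g x := by
    filter_upwards [hu, hξ] with x hux hξx
    have h := hlamt (u x) hux
    have h2 : lam₁ * u x * ξ x < (u x ^ (p - 1) + lamt * u x ^ (q - 1)) * ξ x :=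
      (mul_lt_mul_of_pos_right h hξx)
    simp only [hg]
    nlinarith
  have hint : 0 < ∫ x, g x ∂μm := by
    have h0 : 0 ≤ ∫ x, g x ∂μm :=
      integral_nonneg_of_ae (hgpos.mono fun x hx => hx.le)
    rcases h0.lt_or_eq with h | h
    · exact h
    · exfalso
      have hz : g =ᵐ[μm] 0 :=
        (integral_eq_zero_iff_of_nonneg_ae (hgpos.mono fun x hx => hx.le) hgi).mp h.symm
      have : ∀ᵐ x ∂μm, False := by
        filter_upwards [hgpos, hz] with x h1 h2
        simp [h2] at h1
      have hB : (∫ x, u x ^ (q - 1) * ξ x ∂μm) = 0 := by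
        have : (fun x => u x ^ (q - 1) * ξ x) =ᵐ[μm] (fun _ => (0:ℝ)) :=
          this.mono fun x hx => hx.elim
        rw [integral_congr_ae this, integral_zero]
      exact hpos.ne' hB
  have hsplit : (∫ x, g x ∂μm) =
      (∫ x, u x ^ (p - 1) * ξ x ∂μm) + lamt * (∫ x, u x ^ (q - 1) * ξ x ∂μm)
        - lam₁ * (∫ x, ξ x * u x ∂μm) := by
    have e1 : (∫ x, g x ∂μm) = (∫ x, (u x ^ (p - 1) * ξ x + lamt * (u x ^ (q - 1) * ξ x)) ∂μm)
        - ∫ x, lam₁ * (ξ x * u x) ∂μm :=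
      integral_sub (hi1.add (hi2.const_mul lamt)) (hi3.const_mul lam₁)
    rw [e1, integral_add hi1 (hi2.const_mul lamt), integral_const_mul, integral_const_mul]
  rw [hsplit] at hint
  have : lam * (∫ x, u x ^ (q - 1) * ξ x ∂μm) < lamt * (∫ x, u x ^ (q - 1) * ξ x ∂μm) := by
    linarith
  exact lt_of_mul_lt_mul_right this hpos.le
end
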